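/- arXiv:2201.12842 — 6 statements merged into one kernel-verified Lean document; each statement's English description precedes it below -/
import Mathlib

section
/- Define v^A_γ(t_1,...,t_N) = Σ_{α_1,...,α_N ≥ 0, Σ_{k=1}^N (N+2-k)α_k = N+2-γ} ((|α|+γ-2)!/(γ-1)!) Π_{k=1}^N t_k^{α_k}/α_k!, where |α| = Σα_k. Then the t_0-derivative of the A_N open potential satisfies ∂F^o_{A_N}/∂t_0 = t_0^{N+1}/(N+1) + Σ_{k=1}^N t_0^{k-1} v^A_k(t_1,...,t_N). -/
/-!
Compare coefficients. Iterating `coeff m (∂ᵢ P) = (mᵢ + 1) · coeff (m + eᵢ) P` shows that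
`d! · coeff_d P` is the value at `0` of `∂^d P`, so the defining property of `F` gives every
coefficient of `F`: writing `w(e) = ∑ (N + 2 - i) e_i`, the coefficient of `t_0^s t^e` (with
`e_0 = 0`) is `(|e| + s - 2)! / (s! e!)` if `w(e) + s = N + 2`, and `0` otherwise. Hence the
coefficient of `t_0^s t^e` in `∂F/∂t_0` is `(|e| + s - 1)! / (s! e!)` if `w(e) = N + 1 - s`, and
`0` otherwise, which is the coefficient of `t^e` in `v^A_{s+1}`; so
`∂F/∂t_0 = ∑_{γ=1}^{N+2} t_0^{γ-1} v^A_γ`. Since `w(e) ≥ 2 |e|`, the term `γ = N + 1` vanishes and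
`γ = N + 2` is `t_0^{N+1}/(N+1)`.
-/

open MvPolynomial

/-- `F` is the genus-zero open potential of type `A_N`, characterized by its iterated
partial derivatives at `0`. -/
def OpenAPotential (N : ℕ) (F : MvPolynomial (Fin (N + 1)) ℚ) : Prop :=
  ∀ (m k : ℕ) (α : Fin m → Fin (N + 1)), (∀ i, α i ≠ 0) →
    MvPolynomial.eval (fun _ => (0 : ℚ))
      ((List.ofFn α ++ List.replicate k (0 : Fin (N + 1))).foldr
        (fun i p => MvPolynomial.pderiv i p) F)
    = if (∑ i, (N + 2 - (α i : ℕ))) + k = N + 2 then ((m + k - 2).factorial : ℚ) else 0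

/-- The polynomial `v^A_γ(t_1,…,t_N) = ∑_{α : ∑ (N+2-k) α_k = N+2-γ}
((|α|+γ-2)!/(γ-1)!) ∏ t_k^{α_k}/α_k!` (the variable `t_0` is not used,
i.e. multi-indices have `α_0 = 0`). -/
noncomputable def vA (N γ : ℕ) : MvPolynomial (Fin (N + 1)) ℚ :=
  ∑ a ∈ Finset.filter
      (fun a : Fin (N + 1) → ℕ => a 0 = 0 ∧ ∑ i : Fin (N + 1), (N + 2 - (i : ℕ)) * a i = N + 2 - γ)
      (Fintype.piFinset fun _ : Fin (N + 1) => Finset.range (N + 3)),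
    MvPolynomial.C ((((∑ i, a i) + γ - 2).factorial : ℚ) / ((γ - 1).factorial : ℚ) /
        ∏ i, ((a i).factorial : ℚ)) *
      ∏ i, MvPolynomial.X i ^ a i

open Finsupp Nat

section Taylor

lemma Finsupp.prod_univ_comp_add_single {σ M : Type*} [Fintype σ] [DecidableEq σ] [CommMonoid M]
    (f : ℕ → M) (m : σ →₀ ℕ) (a : σ) (s : ℕ) :
    ∏ i, f ((m + single a s) i) = f (m a + s) * ∏ i ∈ {a}ᶜ, f (m i) := by
  rw [Fintype.prod_eq_mul_prod_compl a]
  congr 1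
  · simp
  · refine Finset.prod_congr rfl fun i hi => ?_
    rw [Finsupp.add_apply, single_eq_of_ne (by simpa [eq_comm] using hi), add_zero]

variable {σ R : Type*} [Fintype σ] [DecidableEq σ] [CommSemiring R]

lemma prod_factorial_add_single_one (m : σ →₀ ℕ) (a : σ) :
    ∏ i, (((m + single a 1 : σ →₀ ℕ) i)! : R) = (m a + 1) * ∏ i, ((m i)! : R) := by
  rw [Finsupp.prod_univ_comp_add_single (fun n => (n ! : R)), Fintype.prod_eq_mul_prod_compl a,
    factorial_succ]
  push_cast
  ring

lemma prod_factorial_add_single_of_eq_zero {e : σ →₀ ℕ} {a : σ} (he : e a = 0) (s : ℕ) :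
    ∏ i, (((e + single a s : σ →₀ ℕ) i)! : R) = s ! * ∏ i, ((e i)! : R) := by
  rw [Finsupp.prod_univ_comp_add_single (fun n => (n ! : R)), Fintype.prod_eq_mul_prod_compl a, he]
  simp

theorem factorial_mul_coeff_add_toFinsupp (L : List σ) (P : MvPolynomial σ R) (m : σ →₀ ℕ) :
    (∏ i, (((m + Multiset.toFinsupp (L : Multiset σ)) i)! : R))
        * coeff (m + Multiset.toFinsupp (L : Multiset σ)) P
      = (∏ i, ((m i)! : R)) * coeff m (L.foldr (fun i p => pderiv i p) P) := by
  induction L generalizing m with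
  | nil => simp
  | cons a L ih =>
    have hsplit : m + Multiset.toFinsupp ↑(a :: L) = m + single a 1 + Multiset.toFinsupp L := by
      rw [← Multiset.cons_coe, ← Multiset.singleton_add, Multiset.toFinsupp_add,
        Multiset.toFinsupp_singleton, add_assoc]
    rw [hsplit, ih, List.foldr_cons, coeff_pderiv, prod_factorial_add_single_one]
    ring

theorem factorial_mul_coeff_toFinsupp_eq_eval_foldr (L : List σ) (P : MvPolynomial σ R) :
    (∏ i, ((Multiset.toFinsupp (L : Multiset σ) i)! : R)) * coeff (Multiset.toFinsupp L) P
      = eval 0 (L.foldr (fun i p => pderiv i p) P) := by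
  simpa [eval_zero, constantCoeff_eq] using factorial_mul_coeff_add_toFinsupp L P 0

end Taylor

lemma List.sum_map_eq_sum_count {ι M : Type*} [Fintype ι] [DecidableEq ι] [AddCommMonoid M]
    (l : List ι) (g : ι → M) : (l.map g).sum = ∑ i, l.count i • g i := by
  rw [Finset.sum_list_map_count]
  exact Finset.sum_subset (Finset.subset_univ _) fun i _ hi => by
    rw [List.count_eq_zero_of_not_mem (by simpa using hi), zero_smul]

def weightA (N : ℕ) (e : Fin (N + 1) → ℕ) : ℕ := ∑ i : Fin (N + 1), (N + 2 - (i : ℕ)) * e i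

section weightA

variable {N : ℕ} (e : Fin (N + 1) → ℕ)

lemma two_mul_sum_le_weightA : 2 * ∑ i, e i ≤ weightA N e := by
  rw [Finset.mul_sum]
  exact Finset.sum_le_sum fun i _ => Nat.mul_le_mul_right _ (by have := i.isLt; omega)

end weightA

section OpenAPotential

variable {N : ℕ} {F : MvPolynomial (Fin (N + 1)) ℚ}

lemma OpenAPotential.eval_foldr_pderiv (hF : OpenAPotential N F) {l : List (Fin (N + 1))}
    (hl : 0 ∉ l) (k : ℕ) :
    eval 0 ((l ++ List.replicate k 0).foldr (fun i p => pderiv i p) F)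
      = if (l.map fun i : Fin (N + 1) => N + 2 - (i : ℕ)).sum + k = N + 2
        then ((l.length + k - 2)! : ℚ) else 0 := by
  have h := hF l.length k l.get fun j hj => hl (hj ▸ List.get_mem l j)
  simp only [List.get_eq_getElem] at h
  rwa [List.ofFn_get, Fin.sum_univ_fun_getElem l fun i : Fin (N + 1) => N + 2 - (i : ℕ)] at h

theorem OpenAPotential.coeff_add_single_zero (hF : OpenAPotential N F) {e : Fin (N + 1) →₀ ℕ}
    (he : e 0 = 0) (s : ℕ) :
    coeff (e + single 0 s) F
      = if weightA N e + s = N + 2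
        then (((∑ i, e i) + s - 2)! : ℚ) / (s ! * ∏ i, ((e i)! : ℚ)) else 0 := by
  set l := (toMultiset e).toList
  have hcount : ∀ i, l.count i = e i := fun i => by
    rw [← Multiset.coe_count, Multiset.coe_toList, count_toMultiset]
  have hl0 : 0 ∉ l := by
    rw [← List.count_eq_zero, hcount, he]
  have htoFinsupp : Multiset.toFinsupp (↑(l ++ List.replicate s (0 : Fin (N + 1))))
      = e + single 0 s := by
    ext i
    simp [Multiset.toFinsupp_apply, hcount, List.count_replicate, single_apply]
  have hweight : (l.map fun i : Fin (N + 1) => N + 2 - (i : ℕ)).sum = weightA N e := by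
    simp only [List.sum_map_eq_sum_count, hcount, smul_eq_mul, weightA, mul_comm]
  have hlength : l.length = ∑ i, e i := by
    simpa [hcount] using List.sum_map_eq_sum_count l fun _ => (1 : ℕ)
  have h := factorial_mul_coeff_toFinsupp_eq_eval_foldr (R := ℚ)
    (l ++ List.replicate s (0 : Fin (N + 1))) F
  rw [hF.eval_foldr_pderiv hl0, htoFinsupp, prod_factorial_add_single_of_eq_zero he, hweight,
    hlength] at h
  have hpos : (s ! * ∏ i, ((e i)! : ℚ)) ≠ 0 := by positivity
  rw [← mul_right_inj' hpos, h, mul_ite, mul_div_cancel₀ _ hpos, mul_zero]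

end OpenAPotential

section vA

variable {N : ℕ}

theorem coeff_vA (γ : ℕ) (e : Fin (N + 1) →₀ ℕ) :
    coeff e (vA N γ) = if e 0 = 0 ∧ weightA N e = N + 2 - γ
      then (((∑ i, e i) + γ - 2)! : ℚ) / (γ - 1)! / ∏ i, ((e i)! : ℚ) else 0 := by
  have hindicator (a : Fin (N + 1) → ℕ) :
      e = indicator Finset.univ (fun i _ => a i) ↔ ⇑e = a := by
    rw [DFunLike.ext'_iff]
    simp [funext_iff]
  simp only [vA, coeff_sum, coeff_C_mul, coeff_prod_X_pow, hindicator, mul_ite, mul_one, mul_zero,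
    Finset.sum_ite_eq, Finset.mem_filter, Fintype.mem_piFinset, Finset.mem_range]
  refine if_congr ⟨fun h => h.2, fun h => ⟨fun i => ?_, h⟩⟩ rfl rfl
  have := two_mul_sum_le_weightA e
  have := Finset.single_le_sum (fun j _ => Nat.zero_le (e j)) (Finset.mem_univ i)
  omega

lemma eq_zero_of_weightA_le_one {e : Fin (N + 1) →₀ ℕ} (he : weightA N e ≤ 1) : e = 0 := by
  have hsum : ∑ i, e i = 0 := by
    have := two_mul_sum_le_weightA e
    omega
  ext i
  exact Finset.sum_eq_zero_iff.mp hsum i (Finset.mem_univ i)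

theorem vA_N_add_one : vA N (N + 1) = 0 := by
  ext e
  rw [coeff_vA, coeff_zero, if_neg]
  rintro ⟨-, he⟩
  have h0 := eq_zero_of_weightA_le_one (e := e) (by omega)
  simp [h0, weightA] at he

theorem vA_N_add_two : vA N (N + 2) = C (1 / ((N : ℚ) + 1)) := by
  ext e
  rw [coeff_vA, coeff_C]
  by_cases he : e = 0
  · subst he
    simp [weightA, factorial_succ, mul_comm, div_mul_cancel_left₀, factorial_ne_zero]
  · rw [if_neg (Ne.symm he), if_neg fun h => he (eq_zero_of_weightA_le_one (by omega))]

lemma coeff_vA_of_apply_zero_ne_zero {e : Fin (N + 1) →₀ ℕ} (he : e 0 ≠ 0) (γ : ℕ) :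
    coeff e (vA N γ) = 0 := by
  rw [coeff_vA, if_neg fun h => he h.1]

lemma coeff_add_single_zero_X_zero_pow_mul_vA {e : Fin (N + 1) →₀ ℕ} (he : e 0 = 0) (s j γ : ℕ) :
    coeff (e + single 0 s) (X 0 ^ j * vA N γ) = if s = j then coeff e (vA N γ) else 0 := by
  rw [X_pow_eq_monomial, coeff_monomial_mul', one_mul]
  split_ifs with hle hsj hsj
  · rw [hsj, add_tsub_cancel_right]
  · apply coeff_vA_of_apply_zero_ne_zero
    have hjs := single_le_iff.mp hle
    simp only [tsub_apply, Finsupp.add_apply, he, single_eq_same, zero_add] at hjs ⊢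
    omega
  · exact absurd (hsj ▸ le_add_self) hle
  · rfl

end vA

theorem OpenAPotential.pderiv_zero_eq_sum {N : ℕ} {F : MvPolynomial (Fin (N + 1)) ℚ}
    (hF : OpenAPotential N F) :
    pderiv 0 F = ∑ γ ∈ Finset.Icc 1 (N + 2), X 0 ^ (γ - 1) * vA N γ := by
  ext d
  obtain ⟨e, s, he, rfl⟩ : ∃ e : Fin (N + 1) →₀ ℕ, ∃ s, e 0 = 0 ∧ d = e + single 0 s :=
    ⟨erase 0 d, d 0, erase_same, (erase_add_single 0 d).symm⟩
  rw [coeff_pderiv, add_assoc, ← single_add, hF.coeff_add_single_zero he, coeff_sum]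
  simp_rw [coeff_add_single_zero_X_zero_pow_mul_vA he]
  have hshift : ∀ γ ∈ Finset.Icc 1 (N + 2), (s = γ - 1 ↔ s + 1 = γ) := fun γ hγ => by
    have := (Finset.mem_Icc.mp hγ).1
    omega
  rw [Finset.sum_congr rfl fun γ hγ => if_congr (hshift γ hγ) rfl rfl, Finset.sum_ite_eq,
    coeff_vA, Finsupp.add_apply, he, single_eq_same, zero_add, add_tsub_cancel_right]
  by_cases hw : weightA N e + (s + 1) = N + 2
  · rw [if_pos hw, if_pos (Finset.mem_Icc.mpr (by omega)), if_pos ⟨rfl, by omega⟩, factorial_succ]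
    push_cast
    field_simp
  · rw [if_neg hw, zero_mul]
    split_ifs with hrange hcond
    · have := Finset.mem_Icc.mp hrange
      omega
    all_goals rfl

theorem openA_t0_derivative_general (N : ℕ)
    (F : MvPolynomial (Fin (N + 1)) ℚ) (hF : OpenAPotential N F) :
    MvPolynomial.pderiv (0 : Fin (N + 1)) F
      = MvPolynomial.C (1 / ((N : ℚ) + 1)) * MvPolynomial.X (0 : Fin (N + 1)) ^ (N + 1)
        + ∑ k ∈ Finset.Icc 1 N, MvPolynomial.X (0 : Fin (N + 1)) ^ (k - 1) * vA N k := by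
  rw [hF.pderiv_zero_eq_sum, Finset.sum_Icc_succ_top (by omega),
    Finset.sum_Icc_succ_top (by omega), vA_N_add_one, vA_N_add_two, mul_zero, add_zero,
    Nat.add_sub_cancel]
  ring

/-- `∂F^o_{A_N}/∂t_0 = t_0^{N+1}/(N+1) + ∑_{k=1}^N t_0^{k-1} v^A_k`. -/
theorem openA_t0_derivative (N : ℕ) (hN : 1 ≤ N)
    (F : MvPolynomial (Fin (N + 1)) ℚ) (hF : OpenAPotential N F) :
    MvPolynomial.pderiv (0 : Fin (N + 1)) F
      = MvPolynomial.C (1 / ((N : ℚ) + 1)) * MvPolynomial.X (0 : Fin (N + 1)) ^ (N + 1)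
        + ∑ k ∈ Finset.Icc 1 N, MvPolynomial.X (0 : Fin (N + 1)) ^ (k - 1) * vA N k :=
  openA_t0_derivative_general N F hF
end

section
/- Stabilization of the open A-type potential: for any natural numbers N < M and any α with 1 ≤ α ≤ N, the polynomial ∂F^o_{A_N}/∂t_α after the substitution t_{N+1-β} = s_β (for all 1 ≤ β ≤ N) equals the polynomial ∂F^o_{A_M}/∂t_α after the substitution t_{M+1-β} = s_β (for all 1 ≤ β ≤ M), as polynomials in t_0, s_1, ..., s_{M+1}. -/
open MvPolynomial

/-- The substitution `t_{N+1-β} = s_β` (and `t_0` kept): variable `t_i` (for `i ≥ 1`)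
is renamed to `s_{N+1-i}`, encoded as the variable `N+1-i ≥ 1` of `MvPolynomial ℕ ℚ`;
`t_0` is encoded as the variable `0`. -/
def substA (N : ℕ) : Fin (N + 1) → ℕ := fun i => if i = 0 then 0 else N + 1 - (i : ℕ)

/-! The axioms of `OpenAPotential` pin down every coefficient: `d! · [t^d] F` is `(|d| - 2)!`
when `d` has weighted degree `N + 2`, where `t_0` has weight `1` and `t_i` (`i ≥ 1`) has weight
`N + 2 - i`, and `0` otherwise. After the substitution `t_{N+1-β} = s_β` the variable `s_j`
(with `s_0 = t_0`) has weight `j + 1`, independently of `N`. Hence the coefficient of `s^e` in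
the substituted `∂F/∂t_α` is `(|e| - 1)! / e!` if `e` has weight `α` and `0` otherwise; a
variable `s_j` with `j > N` has weight `> α`, so it is absent on both sides. -/

lemma Multiset.toFinsupp_cons {σ : Type*} [DecidableEq σ] (a : σ) (s : Multiset σ) :
    toFinsupp (a ::ₘ s) = Finsupp.single a 1 + toFinsupp s := by
  rw [← singleton_add, toFinsupp_add, toFinsupp_singleton]

lemma Multiset.weight_toFinsupp {σ M : Type*} [DecidableEq σ] [AddCommMonoid M] (w : σ → M)
    (s : Multiset σ) : Finsupp.weight w (toFinsupp s) = (s.map w).sum := by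
  induction s using Multiset.induction_on with
  | empty => simp
  | cons a s ih => simp [toFinsupp_cons, ih, Finsupp.weight_single]

lemma Finsupp.weight_mapDomain {σ τ M : Type*} [AddCommMonoid M] (w : τ → M) (f : σ → τ)
    (d : σ →₀ ℕ) : weight w (d.mapDomain f) = weight (w ∘ f) d := by
  simp [weight_apply, sum_mapDomain_index, add_smul]

section FactorialProd

variable {σ R : Type*} [CommSemiring R]

noncomputable def factorialProd (d : σ →₀ ℕ) : ℕ := d.prod fun _ n => n.factorial

lemma factorialProd_pos (d : σ →₀ ℕ) : 0 < factorialProd d :=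
  Finset.prod_pos fun i _ => Nat.factorial_pos (d i)

lemma factorialProd_add_single [DecidableEq σ] (d : σ →₀ ℕ) (a : σ) :
    factorialProd (d + Finsupp.single a 1) = (d a + 1) * factorialProd d := by
  have h := Finsupp.mul_prod_erase' (d + Finsupp.single a 1) a (fun _ n => n.factorial)
    fun _ => Nat.factorial_zero
  rw [Finsupp.erase_add, Finsupp.erase_single, add_zero, Finsupp.add_apply,
    Finsupp.single_eq_same, Nat.factorial_succ, mul_assoc] at h
  rw [factorialProd, factorialProd, ← h,
    ← Finsupp.mul_prod_erase' d a _ fun _ => Nat.factorial_zero]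

lemma factorialProd_mapDomain {τ : Type*} {f : σ → τ} (hf : Function.Injective f)
    (d : σ →₀ ℕ) : factorialProd (d.mapDomain f) = factorialProd d :=
  Finsupp.prod_mapDomain_index_inj hf

lemma factorialProd_mul_coeff_pderiv [DecidableEq σ] (a : σ) (p : MvPolynomial σ R)
    (d : σ →₀ ℕ) :
    (factorialProd d : R) * coeff d (pderiv a p)
      = factorialProd (d + Finsupp.single a 1) * coeff (d + Finsupp.single a 1) p := by
  rw [coeff_pderiv, factorialProd_add_single]
  push_cast
  ring

lemma factorialProd_mul_coeff_foldr_pderiv [DecidableEq σ] (L : List σ) (p : MvPolynomial σ R)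
    (d : σ →₀ ℕ) :
    (factorialProd d : R) * coeff d (L.foldr (fun i q => pderiv i q) p)
      = factorialProd (d + Multiset.toFinsupp L) * coeff (d + Multiset.toFinsupp L) p := by
  induction L generalizing d with
  | nil => simp
  | cons a L ih =>
    rw [List.foldr_cons, factorialProd_mul_coeff_pderiv, ih, ← Multiset.cons_coe,
      Multiset.toFinsupp_cons, add_assoc]

lemma eval_zero_foldr_pderiv [DecidableEq σ] (L : List σ) (p : MvPolynomial σ R) :
    eval (fun _ => 0) (L.foldr (fun i q => pderiv i q) p)
      = factorialProd (Multiset.toFinsupp (L : Multiset σ))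
          * coeff (Multiset.toFinsupp (L : Multiset σ)) p := by
  simpa [eval_zero', constantCoeff_eq, factorialProd] using
    factorialProd_mul_coeff_foldr_pderiv L p 0

end FactorialProd

lemma substA_injective (N : ℕ) : Function.Injective (substA N) := by
  intro i j h
  simp only [substA] at h
  rw [Fin.ext_iff]
  split_ifs at h with hi hj hj <;> simp only [Fin.ext_iff, Fin.val_zero] at * <;> omega

lemma mem_range_substA {N j : ℕ} (hj : j ≤ N) : j ∈ Set.range (substA N) := by
  rcases Nat.eq_zero_or_pos j with rfl | hj0
  · exact ⟨0, rfl⟩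
  · refine ⟨⟨N + 1 - j, by omega⟩, ?_⟩
    have : (⟨N + 1 - j, by omega⟩ : Fin (N + 1)) ≠ 0 := by simp [Fin.ext_iff]; omega
    simp only [substA, if_neg this]
    omega

lemma substA_add_one {N : ℕ} {i : Fin (N + 1)} (hi : i ≠ 0) : substA N i + 1 = N + 2 - i := by
  simp [substA, hi] at hi ⊢
  omega

namespace OpenAPotential

variable {N : ℕ} {F : MvPolynomial (Fin (N + 1)) ℚ}

theorem factorialProd_mul_coeff (hF : OpenAPotential N F) (d : Fin (N + 1) →₀ ℕ) :
    (factorialProd d : ℚ) * coeff d F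
      = if Finsupp.weight (fun i => substA N i + 1) d = N + 2
        then ((d.degree - 2).factorial : ℚ) else 0 := by
  classical
  set l := (Finsupp.toMultiset (d.erase 0)).toList with hl
  have hl0 : ∀ i, l.get i ≠ 0 := fun i h => by
    have := List.get_mem l i
    rw [h] at this
    simp [hl] at this
  have hld : Multiset.toFinsupp (l : Multiset (Fin (N + 1))) = d.erase 0 := by
    rw [hl, Multiset.coe_toList, Finsupp.toMultiset_toFinsupp]
  have hL : Multiset.toFinsupp ((List.ofFn l.get ++ List.replicate (d 0) 0 : List _) :
      Multiset (Fin (N + 1))) = d := by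
    rw [List.ofFn_get, ← Multiset.coe_add, Multiset.toFinsupp_add, hld, Multiset.coe_replicate,
      ← Multiset.nsmul_singleton, ← Finsupp.toMultiset_single, Finsupp.toMultiset_toFinsupp,
      Finsupp.erase_add_single]
  have hweight : ∑ i, (N + 2 - (l.get i : ℕ)) + d 0
      = Finsupp.weight (fun i => substA N i + 1) d := by
    have hsum : ∑ i, (N + 2 - (l.get i : ℕ)) = ∑ i : Fin l.length, (substA N l[i.1] + 1) :=
      Finset.sum_congr rfl fun i _ => (substA_add_one (hl0 i)).symm
    conv_rhs => rw [← Finsupp.erase_add_single 0 d]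
    rw [map_add, ← hld, Multiset.weight_toFinsupp, Finsupp.weight_single, Multiset.map_coe,
      Multiset.sum_coe, hsum, Fin.sum_univ_fun_getElem l fun i => substA N i + 1]
    simp [substA]
  have hdegree : l.length + d 0 = d.degree := by
    conv_rhs => rw [← Finsupp.erase_add_single 0 d]
    rw [map_add, Finsupp.degree_single, hl, Multiset.length_toList, Finsupp.card_toMultiset]
    rfl
  have := hF l.length (d 0) l.get hl0
  rw [eval_zero_foldr_pderiv, hL, hweight, hdegree] at this
  exact this

theorem factorialProd_mul_coeff_pderiv (hF : OpenAPotential N F) {a : Fin (N + 1)}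
    (ha : a ≠ 0) (d : Fin (N + 1) →₀ ℕ) :
    (factorialProd d : ℚ) * coeff d (pderiv a F)
      = if Finsupp.weight (fun i => substA N i + 1) d = a
        then ((d.degree - 1).factorial : ℚ) else 0 := by
  classical
  rw [_root_.factorialProd_mul_coeff_pderiv, hF.factorialProd_mul_coeff, map_add, map_add,
    Finsupp.weight_single, Finsupp.degree_single, smul_eq_mul, one_mul, substA_add_one ha]
  have hcond : Finsupp.weight (fun i => substA N i + 1) d + (N + 2 - a) = N + 2
      ↔ Finsupp.weight (fun i => substA N i + 1) d = a := by
    have := a.isLt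
    omega
  have hdeg : d.degree + 1 - 2 = d.degree - 1 := by omega
  simp only [hcond, hdeg]

theorem factorialProd_mul_coeff_rename_pderiv (hF : OpenAPotential N F) {a : Fin (N + 1)}
    (ha : a ≠ 0) (e : ℕ →₀ ℕ) :
    (factorialProd e : ℚ) * coeff e (rename (substA N) (pderiv a F))
      = if Finsupp.weight (· + 1) e = (a : ℕ) then ((e.degree - 1).factorial : ℚ) else 0 := by
  by_cases he : e ∈ Set.range (Finsupp.mapDomain (substA N))
  · obtain ⟨d, rfl⟩ := he
    rw [coeff_rename_mapDomain _ (substA_injective N),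
      factorialProd_mapDomain (substA_injective N), Finsupp.degree_mapDomain,
      Finsupp.weight_mapDomain, hF.factorialProd_mul_coeff_pderiv ha]
    rfl
  · obtain ⟨j, hj, hej⟩ : ∃ j ∉ Set.range (substA N), e j ≠ 0 := by
      simpa [Finsupp.mem_range_mapDomain_iff _ (substA_injective N)] using he
    have hNj : N < j := lt_of_not_ge fun h => hj (mem_range_substA h)
    have hweight : j + 1 ≤ Finsupp.weight (· + 1) e := Finsupp.le_weight_of_ne_zero' _ hej
    rw [coeff_rename_eq_zero _ _ _ fun u hu => absurd ⟨u, hu⟩ he, mul_zero, if_neg]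
    have := a.isLt
    omega

end OpenAPotential

/-- stabilization of the open A-type potential. For `N < M` and
`1 ≤ α ≤ N`, `∂F^o_{A_N}/∂t_α` after `t_{N+1-β} = s_β` equals `∂F^o_{A_M}/∂t_α`
after `t_{M+1-β} = s_β`, as polynomials in `t_0, s_1, s_2, …`. -/
theorem openA_stabilization (N M : ℕ) (hNM : N < M)
    (FN : MvPolynomial (Fin (N + 1)) ℚ) (hFN : OpenAPotential N FN)
    (FM : MvPolynomial (Fin (M + 1)) ℚ) (hFM : OpenAPotential M FM)
    (α : ℕ) (hα1 : 1 ≤ α) (hα2 : α ≤ N) :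
    MvPolynomial.rename (substA N)
        (MvPolynomial.pderiv (⟨α, by omega⟩ : Fin (N + 1)) FN)
      = MvPolynomial.rename (substA M)
        (MvPolynomial.pderiv (⟨α, by omega⟩ : Fin (M + 1)) FM) := by
  ext e
  have hα0 {n : ℕ} (h : α < n + 1) : (⟨α, h⟩ : Fin (n + 1)) ≠ 0 :=
    Fin.ne_of_val_ne (Nat.one_le_iff_ne_zero.mp hα1)
  have he : (factorialProd e : ℚ) ≠ 0 := Nat.cast_ne_zero.mpr (factorialProd_pos e).ne'
  refine mul_left_cancel₀ he ?_
  rw [hFN.factorialProd_mul_coeff_rename_pderiv (hα0 _),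
    hFM.factorialProd_mul_coeff_rename_pderiv (hα0 _)]
end

section
/- Let x_2, x_3, ... and y_1, y_2, ... be formal variables and suppose they satisfy, for every α ≥ 1, the relation y_α = Σ_{m=1}^α φ_{α,m}/m + Σ_{m=0}^{α-1} Σ_{k=m+1}^α (y_1^{α+1-k}/(α+1-k)!) · ((m+α-k)!/m!) · φ_{k-1,m}, where φ_{k,m} = Σ_{γ_1+...+γ_m=k, γ_i≥2} x_{γ_1}···x_{γ_m} (with φ_{k,0} = δ_{k,0}). Then as formal power series in z: Σ_{α≥1} y_α z^α = -log(1 - Σ_{α≥2} x_α z^α - z·y_1). -/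
/-!
Write the argument of the logarithm as `u = y₁ z + X(z)` with `X = ∑_{α ≥ 2} x_α z^α`, so that
`φ_{k,m} = [z^k] X^m`. The binomial theorem gives `[z^n] u^m = ∑_j C(m,j) y₁^j φ_{n-j,m-j}`.
Summing `[z^n] u^m / m` over `m` and reindexing by the number `j` of factors `y₁ z` (the `j = 0`
terms give `∑_m φ_{n,m}/m`, and `j ≥ 1` corresponds to `k = n + 1 - j`), the identity
`C(m+j, j) / (m+j) = (m+j-1)! / (j! m!)` turns `[z^n] (-log(1-u))` into the relation for `y_n`.
-/

open PowerSeries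

/-- Compositions of `s` into `m` parts, each part `≥ lo`. -/
def comps (m s lo : ℕ) : Finset (Fin m → ℕ) :=
  Finset.filter (fun γ : Fin m → ℕ => (∀ i, lo ≤ γ i) ∧ ∑ i, γ i = s)
    (Fintype.piFinset fun _ : Fin m => Finset.range (s + 1))

/-- `-log(1-u)` for a power series `u` with zero constant term:
`∑_{m ≥ 1} u^m/m` (the `m = 0` term contributes `0` since division by `0` is `0`). -/
noncomputable def negLogOneSub (u : PowerSeries ℚ) : PowerSeries ℚ :=
  PowerSeries.mk fun n => ∑ m ∈ Finset.range (n + 1), PowerSeries.coeff n (u ^ m) / m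

open Finset

theorem mem_comps {m s lo : ℕ} {γ : Fin m → ℕ} :
    γ ∈ comps m s lo ↔ (∀ i, lo ≤ γ i) ∧ ∑ i, γ i = s := by
  simp only [comps, mem_filter, Fintype.mem_piFinset, mem_range, and_iff_right_iff_imp]
  rintro ⟨-, rfl⟩ i
  exact Nat.lt_succ_of_le (single_le_sum (fun j _ => Nat.zero_le (γ j)) (mem_univ i))

theorem comps_eq_filter_finAntidiagonal (m s lo : ℕ) :
    comps m s lo = (finAntidiagonal m s).filter fun γ => ∀ i, lo ≤ γ i := by
  ext γ
  simp [mem_comps, and_comm]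

section PowerSeries

variable {R : Type*} [CommSemiring R]

theorem coeff_pow_eq_sum_finAntidiagonal (p : R⟦X⟧) (m n : ℕ) :
    coeff n (p ^ m) = ∑ γ ∈ finAntidiagonal m n, ∏ i, coeff (γ i) p := by
  have hprod : p ^ m = ∏ _i : Fin m, p := by simp
  rw [hprod, coeff_prod]
  refine sum_nbij' (⇑) Finsupp.equivFunOnFinite.symm ?_ ?_ ?_ ?_ ?_ <;> simp

theorem coeff_pow_eq_sum_comps (p : R⟦X⟧) {lo : ℕ} (hp : ∀ g < lo, coeff g p = 0) (m n : ℕ) :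
    coeff n (p ^ m) = ∑ γ ∈ comps m n lo, ∏ i, coeff (γ i) p := by
  rw [coeff_pow_eq_sum_finAntidiagonal, comps_eq_filter_finAntidiagonal, sum_filter_of_ne]
  intro γ _ hγ
  by_contra! ⟨i, hi⟩
  exact hγ (prod_eq_zero (mem_univ i) (hp _ hi))

theorem coeff_C_mul_X_add_pow (c : R) (q : R⟦X⟧) {m n : ℕ} (h : m ≤ n) :
    coeff n ((C c * X + q) ^ m)
      = ∑ j ∈ range (m + 1), m.choose j * c ^ j * coeff (n - j) (q ^ (m - j)) := by
  rw [add_pow, map_sum]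
  refine sum_congr rfl fun j hj => ?_
  have hjn : j ≤ n := (Nat.lt_succ_iff.mp (mem_range.mp hj)).trans h
  rw [mul_pow, ← map_pow, ← map_natCast (C (R := R)), mul_comm, ← mul_assoc, ← mul_assoc,
    ← map_mul, mul_assoc, coeff_C_mul, coeff_X_pow_mul', if_pos hjn]

end PowerSeries

section Reindexing

variable {K : Type*} [Field K] [CharZero K]

theorem choose_succ_div_eq (m j : ℕ) :
    ((m + (j + 1)).choose (j + 1) : K) / (m + (j + 1) : ℕ)
      = (m + j).factorial / ((j + 1).factorial * m.factorial) := by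
  rw [Nat.cast_choose K (by omega : j + 1 ≤ m + (j + 1)), show m + (j + 1) - (j + 1) = m by omega,
    ← add_assoc, Nat.factorial_succ]
  have := Nat.cast_add_one_ne_zero (R := K) (m + j)
  push_cast at this ⊢
  field_simp

theorem sum_range_sum_Icc_eq {M : Type*} [AddCommMonoid M] (g : ℕ → ℕ → M) (n : ℕ) :
    ∑ m ∈ range n, ∑ k ∈ Icc (m + 1) n, g m k
      = ∑ j ∈ range n, ∑ m ∈ range (n - j), g m (n - j) := by
  rw [sum_comm' (t' := Icc 1 n) (s' := range) (by intro m k; simp only [mem_range, mem_Icc]; omega)]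
  refine sum_nbij' (n - ·) (n - ·) ?_ ?_ ?_ ?_ ?_
  all_goals intro k hk; simp only [mem_range, mem_Icc] at hk ⊢
  any_goals omega
  rw [show n - (n - k) = k by omega]

theorem sum_div_sum_choose_eq (φ : ℕ → ℕ → K) (c : K) (n : ℕ) :
    ∑ m ∈ range (n + 1),
        (∑ j ∈ range (m + 1), (m.choose j : K) * c ^ j * φ (n - j) (m - j)) / m
      = (∑ m ∈ Icc 1 n, φ n m / m)
        + ∑ m ∈ range n, ∑ k ∈ Icc (m + 1) n,
            c ^ (n + 1 - k) / ((n + 1 - k).factorial : K)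
              * (((m + n - k).factorial : K) / (m.factorial : K)) * φ (k - 1) m := by
  set T : ℕ → ℕ → K := fun i j => ((i + j).choose j : K) * c ^ j * φ (n - j) i / (i + j : ℕ)
  have hLHS : ∀ m ∈ range (n + 1),
      (∑ j ∈ range (m + 1), (m.choose j : K) * c ^ j * φ (n - j) (m - j)) / m
        = ∑ j ∈ range (m + 1), T (m - j) j := by
    intro m _
    rw [sum_div]
    refine sum_congr rfl fun j hj => ?_
    simp only [T, Nat.sub_add_cancel (Nat.lt_succ_iff.mp (mem_range.mp hj))]
  rw [sum_congr rfl hLHS, sum_range_diag_flip (n + 1) fun j i => T i j, sum_range_succ', add_comm,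
    sum_range_sum_Icc_eq]
  congr 1
  · rw [Nat.sub_zero, sum_range_eq_add_Ico _ (by omega : 0 < n + 1), Ico_add_one_right_eq_Icc]
    simp [T]
  · refine sum_congr rfl fun j hj => ?_
    have hjn := mem_range.mp hj
    rw [Nat.add_sub_add_right]
    refine sum_congr rfl fun i _ => ?_
    rw [show n + 1 - (n - j) = j + 1 by omega, show i + n - (n - j) = i + j by omega,
      show n - j - 1 = n - (j + 1) by omega]
    calc T i (j + 1)
        = c ^ (j + 1) * φ (n - (j + 1)) i
            * (((i + (j + 1)).choose (j + 1) : K) / (i + (j + 1) : ℕ)) := by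
          simp only [T]
          ring
      _ = _ := by
          rw [choose_succ_div_eq]
          ring

end Reindexing

/-- if `y_α = ∑_{m=1}^α φ_{α,m}/m + ∑_{m=0}^{α-1} ∑_{k=m+1}^α
(y_1^{α+1-k}/(α+1-k)!)((m+α-k)!/m!) φ_{k-1,m}` for every `α ≥ 1`, where
`φ_{k,m} = ∑_{γ_1+⋯+γ_m=k, γ_i ≥ 2} x_{γ_1}⋯x_{γ_m}`, then
`∑_{α≥1} y_α z^α = -log(1 - ∑_{α≥2} x_α z^α - z y_1)` as formal power series. -/
theorem extended_flows_generating_function (x y : ℕ → ℚ)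
    (φ : ℕ → ℕ → ℚ) (hφ : ∀ k m, φ k m = ∑ γ ∈ comps m k 2, ∏ i, x (γ i))
    (hy : ∀ α, 1 ≤ α →
      y α = (∑ m ∈ Finset.Icc 1 α, φ α m / m)
        + ∑ m ∈ Finset.range α, ∑ k ∈ Finset.Icc (m + 1) α,
            y 1 ^ (α + 1 - k) / ((α + 1 - k).factorial : ℚ)
              * (((m + α - k).factorial : ℚ) / (m.factorial : ℚ)) * φ (k - 1) m) :
    PowerSeries.mk (fun n => if n = 0 then 0 else y n)
      = negLogOneSub
          (PowerSeries.mk fun n => if n = 1 then y 1 else if 2 ≤ n then x n else 0) := by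
  set q : ℚ⟦X⟧ := PowerSeries.mk fun g => if 2 ≤ g then x g else 0
  have hu : (PowerSeries.mk fun n => if n = 1 then y 1 else if 2 ≤ n then x n else 0)
      = C (y 1) * X + q := by
    ext (_ | _ | g) <;> simp [q]
  have hq : ∀ k m, coeff k (q ^ m) = φ k m := by
    intro k m
    rw [hφ, coeff_pow_eq_sum_comps q (lo := 2) (fun g hg => by simp [q, hg]) m k]
    refine sum_congr rfl fun γ hγ => prod_congr rfl fun i _ => ?_
    simp [q, (mem_comps.mp hγ).1 i]
  ext n
  rcases eq_or_ne n 0 with rfl | hn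
  · simp [negLogOneSub]
  rw [coeff_mk, if_neg hn, hy n (Nat.one_le_iff_ne_zero.mpr hn), ← sum_div_sum_choose_eq,
    negLogOneSub, coeff_mk, hu]
  refine sum_congr rfl fun m hm => ?_
  rw [coeff_C_mul_X_add_pow _ _ (Nat.lt_succ_iff.mp (mem_range.mp hm))]
  simp only [hq]
end

section
/- Stabilization of the open D-type potential: for any integers 4 ≤ N < M and any α with 1 ≤ α < N, the Laurent polynomial ∂F^o_{D_N}/∂t_α under the substitution t_{N-β} = s_β (1 ≤ β ≤ N-1), t_N = s_{-1} equals ∂F^o_{D_M}/∂t_α under the substitution t_{M-β} = s_β (1 ≤ β ≤ M-1), t_M = s_{-1}, as polynomials in s_{-1}, s_1, ..., s_M and Laurent polynomials in t_0. -/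
/-- The polynomial `v^D_b(t_1,…,t_{N-1}) = ∑_{α : ∑ (N-k) α_k = N-b}
((|α|+2b-3)!/(2b-2)!) ∏ t_k^{α_k}/α_k!`, as a function of `t`. -/
noncomputable def vD (N b : ℕ) (t : ℕ → ℝ) : ℝ :=
  ∑ a ∈ Finset.filter
      (fun a : Fin N → ℕ => (∀ i : Fin N, (i : ℕ) = 0 → a i = 0) ∧ ∑ i : Fin N, (N - (i : ℕ)) * a i = N - b)
      (Fintype.piFinset fun _ : Fin N => Finset.range (N + 1)),
    ((((∑ i, a i) + 2 * b - 3).factorial : ℝ) / ((2 * b - 2).factorial : ℝ)) *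
      ∏ i : Fin N, t (i : ℕ) ^ a i / ((a i).factorial : ℝ)

/-- The open potential of type `D_N`:
`F^o_{D_N} = t_0^{2N-1}/(2^{N-2}(2N-1)(2N-2)) + t_N^2/(2t_0)
 + ∑_{k=1}^{N-1} v^D_k t_0^{2k-1}/(2^{k-1}(2k-1))`. -/
noncomputable def FD (N : ℕ) (t : ℕ → ℝ) : ℝ :=
  t 0 ^ (2 * N - 1) / (2 ^ (N - 2) * (2 * (N : ℝ) - 1) * (2 * (N : ℝ) - 2))
    + t N ^ 2 / (2 * t 0)
    + ∑ k ∈ Finset.Icc 1 (N - 1), vD N k t * t 0 ^ (2 * k - 1) / (2 ^ (k - 1) * (2 * (k : ℝ) - 1))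

/-- The partial derivative `∂F/∂t_k` at the point `t`. -/
noncomputable def pd (k : ℕ) (F : (ℕ → ℝ) → ℝ) (t : ℕ → ℝ) : ℝ :=
  deriv (fun x => F (Function.update t k x)) (t k)

/-- The substituted point: `t_0 = t0`, `t_N = s₋₁` (denoted `sbar`), and
`t_{N-β} = s_β` for `1 ≤ β ≤ N-1`, i.e. `t_i = s_{N-i}` for `1 ≤ i ≤ N-1`. -/
noncomputable def ptD (N : ℕ) (t0 sbar : ℝ) (s : ℕ → ℝ) : ℕ → ℝ :=
  fun i => if i = 0 then t0 else if i = N then sbar else s (N - i)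


/-! Substituting `t_i = s_{N-i}`, a monomial `∏ t_i^{a_i}` of `v^D_k` has `s`-weight
`∑ (N - i) a_i = N - k`. Differentiating in `t_α` removes one factor `s_{N-α}` and leaves
`s`-weight `α - k`, so only `k ≤ α` contributes and what survives is a monomial in
`s_1, …, s_{α-1}` alone; its coefficient `(|a| + 2k - 3)!/(2k - 2)!` only sees `|a|`, which is one
more than the total degree of the surviving monomial. Thus `∂F^o_{D_N}/∂t_α` at the substituted
point is an expression in `α`, `t_0` and `s` (`stablePdFD`) not involving `N`. -/

open Finset Function

noncomputable def dpow (x : ℝ) (n : ℕ) : ℝ := x ^ n / n.factorial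

lemma dpow_zero (x : ℝ) : dpow x 0 = 1 := by simp [dpow]

lemma hasDerivAt_dpow (n : ℕ) (x : ℝ) :
    HasDerivAt (fun y => dpow y n) (if n = 0 then 0 else dpow x (n - 1)) x := by
  rcases n with _ | n
  · simpa [dpow_zero] using hasDerivAt_const x (1 : ℝ)
  · refine ((hasDerivAt_pow (n + 1) x).div_const ((n + 1).factorial : ℝ)).congr_deriv ?_
    rw [if_neg n.succ_ne_zero, dpow, Nat.factorial_succ, Nat.cast_mul]
    field_simp
    simp

lemma hasDerivAt_prod_dpow_update {ι : Type*} [Fintype ι] [DecidableEq ι]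
    (x : ι → ℝ) (a : ι → ℕ) (j : ι) :
    HasDerivAt (fun y => ∏ i, dpow (update x j y i) (a i))
      (if a j = 0 then 0 else ∏ i, dpow (x i) ((a - Pi.single j 1 : ι → ℕ) i)) (x j) := by
  have hsplit : ∀ (y : ℝ) (b : ι → ℕ), (∀ i ≠ j, b i = a i) →
      ∏ i, dpow (update x j y i) (b i) = dpow y (b j) * ∏ i ∈ univ.erase j, dpow (x i) (a i) := by
    intro y b hb
    rw [← mul_prod_erase univ _ (mem_univ j), update_self]
    congr 1
    refine prod_congr rfl fun i hi => ?_
    rw [update_of_ne (ne_of_mem_erase hi), hb i (ne_of_mem_erase hi)]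
  have hlower := hsplit (x j) (a - Pi.single j 1 : ι → ℕ) fun i hi => by simp [hi]
  rw [update_eq_self] at hlower
  rw [funext fun y => hsplit y a fun _ _ => rfl, hlower]
  refine ((hasDerivAt_dpow (a j) (x j)).mul_const _).congr_deriv ?_
  split_ifs <;> simp

def vDIndex (N b : ℕ) : Finset (Fin N → ℕ) :=
  Finset.filter
    (fun a : Fin N → ℕ =>
      (∀ i : Fin N, (i : ℕ) = 0 → a i = 0) ∧ ∑ i : Fin N, (N - (i : ℕ)) * a i = N - b)
    (Fintype.piFinset fun _ : Fin N => Finset.range (N + 1))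

noncomputable def vDCoeff (b m : ℕ) : ℝ :=
  ((m + 2 * b - 3).factorial : ℝ) / ((2 * b - 2).factorial : ℝ)

lemma vD_eq_sum (N b : ℕ) (t : ℕ → ℝ) :
    vD N b t = ∑ a ∈ vDIndex N b, vDCoeff b (∑ i, a i) * ∏ i : Fin N, dpow (t i) (a i) := rfl

lemma mem_vDIndex {N b : ℕ} {a : Fin N → ℕ} :
    a ∈ vDIndex N b ↔
      (∀ i : Fin N, (i : ℕ) = 0 → a i = 0) ∧ ∑ i : Fin N, (N - (i : ℕ)) * a i = N - b := by
  refine ⟨fun h => (mem_filter.1 h).2, fun h => mem_filter.2 ⟨?_, h⟩⟩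
  refine Fintype.mem_piFinset.2 fun i => mem_range.2 (Nat.lt_succ_of_le ?_)
  calc a i ≤ (N - i) * a i := Nat.le_mul_of_pos_left _ (by omega)
    _ ≤ ∑ l : Fin N, (N - (l : ℕ)) * a l :=
      single_le_sum (f := fun l : Fin N => (N - (l : ℕ)) * a l) (fun _ _ => Nat.zero_le _)
        (mem_univ i)
    _ ≤ N := h.2 ▸ Nat.sub_le N b

noncomputable def vDDeriv (N b : ℕ) (j : Fin N) (t : ℕ → ℝ) : ℝ :=
  ∑ a ∈ vDIndex N b with a j ≠ 0,
    vDCoeff b (∑ i, a i) * ∏ i : Fin N, dpow (t i) ((a - Pi.single j 1 : Fin N → ℕ) i)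

lemma hasDerivAt_vD_update (N b : ℕ) (j : Fin N) (t : ℕ → ℝ) :
    HasDerivAt (fun y => vD N b (update t j y)) (vDDeriv N b j t) (t j) := by
  simp only [vD_eq_sum, update_apply_of_injective t Fin.val_injective j, vDDeriv, sum_filter]
  refine HasDerivAt.fun_sum fun a _ => ?_
  refine ((hasDerivAt_prod_dpow_update (fun i : Fin N => t i) a j).const_mul _).congr_deriv ?_
  split_ifs <;> simp_all

lemma pd_FD (N : ℕ) (j : Fin N) (hj : (j : ℕ) ≠ 0) (t : ℕ → ℝ) :
    pd j (FD N) t = ∑ k ∈ Icc 1 (N - 1),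
      vDDeriv N k j t * t 0 ^ (2 * k - 1) / (2 ^ (k - 1) * (2 * (k : ℝ) - 1)) := by
  simp only [pd, FD, update_of_ne hj.symm, update_of_ne j.isLt.ne']
  exact (HasDerivAt.const_add _ (HasDerivAt.fun_sum fun k _ =>
    ((hasDerivAt_vD_update N k j t).mul_const _).div_const _)).deriv

@[to_additive]
lemma prod_apply_extend_zero {ι κ A M : Type*} [Fintype ι] [Fintype κ] [Zero A] [CommMonoid M]
    {r : ι → κ} (hr : Injective r) (c : ι → A) (f : κ → A → M) (hf : ∀ l, f l 0 = 1) :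
    ∏ l, f l (extend r c 0 l) = ∏ i, f (r i) (c i) :=
  (Fintype.prod_of_injective r hr _ _
    (fun l hl => by rw [extend_apply' _ _ _ (by simpa using hl), Pi.zero_apply, hf])
    (fun i => by rw [hr.extend_apply])).symm

lemma extend_comp_eq_self {ι κ A : Type*} [Zero A] {r : ι → κ} (hr : Injective r) {b : κ → A}
    (hb : ∀ l ∉ Set.range r, b l = 0) : extend r (b ∘ r) 0 = b := by
  funext l
  by_cases hl : l ∈ Set.range r
  · obtain ⟨i, rfl⟩ := hl
    exact hr.extend_apply _ _ i
  · rw [extend_apply' _ _ _ hl, hb l hl, Pi.zero_apply]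

/-- `c i` is the exponent of `s_{i+1}`. -/
def stableIndex (α k : ℕ) : Finset (Fin α → ℕ) :=
  Finset.filter (fun c : Fin α → ℕ => ∑ i : Fin α, ((i : ℕ) + 1) * c i + k = α)
    (Fintype.piFinset fun _ : Fin α => Finset.range (α + 1))

lemma mem_stableIndex {α k : ℕ} {c : Fin α → ℕ} :
    c ∈ stableIndex α k ↔ ∑ i : Fin α, ((i : ℕ) + 1) * c i + k = α := by
  refine ⟨fun h => (mem_filter.1 h).2, fun h => mem_filter.2 ⟨?_, h⟩⟩
  refine Fintype.mem_piFinset.2 fun i => mem_range.2 (Nat.lt_succ_of_le ?_)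
  calc c i ≤ ((i : ℕ) + 1) * c i := Nat.le_mul_of_pos_left _ (Nat.succ_pos _)
    _ ≤ ∑ l : Fin α, ((l : ℕ) + 1) * c l :=
      single_le_sum (f := fun l : Fin α => ((l : ℕ) + 1) * c l) (fun _ _ => Nat.zero_le _)
        (mem_univ i)
    _ ≤ α := by omega

lemma stableIndex_eq_empty {α k : ℕ} (hk : α < k) : stableIndex α k = ∅ :=
  eq_empty_of_forall_notMem fun _ hc => by have := mem_stableIndex.1 hc; omega

noncomputable def stableVDDeriv (α k : ℕ) (s : ℕ → ℝ) : ℝ :=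
  ∑ c ∈ stableIndex α k, vDCoeff k (∑ i, c i + 1) * ∏ i : Fin α, dpow (s (i + 1)) (c i)

section TopIndex

variable {N : ℕ} (j : Fin N)

/-- The slot `N - 1 - i` of `t`, which the substitution `ptD` turns into `s_{i+1}`. -/
def topIndex (i : Fin (j : ℕ)) : Fin N := Fin.rev (Fin.castLE j.isLt.le i)

lemma topIndex_injective : Injective (topIndex j) :=
  Fin.rev_injective.comp (Fin.castLE_injective _)

lemma val_topIndex (i : Fin (j : ℕ)) : (topIndex j i : ℕ) = N - (i + 1) := by
  simp [topIndex, Fin.val_rev]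

lemma mem_range_topIndex {l : Fin N} : l ∈ Set.range (topIndex j) ↔ N - l ≤ j := by
  constructor
  · rintro ⟨i, rfl⟩
    rw [val_topIndex]
    omega
  · intro h
    refine ⟨⟨N - 1 - l, by omega⟩, Fin.ext ?_⟩
    rw [val_topIndex, Fin.val_mk]
    omega

lemma ptD_topIndex (t0 sbar : ℝ) (s : ℕ → ℝ) (i : Fin (j : ℕ)) :
    ptD N t0 sbar s (topIndex j i) = s (i + 1) := by
  have := j.isLt
  rw [ptD, val_topIndex, if_neg (by omega), if_neg (by omega), Nat.sub_sub_self (by omega)]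

lemma weightedSum_extend_topIndex (c : Fin (j : ℕ) → ℕ) :
    ∑ l : Fin N, (N - (l : ℕ)) * extend (topIndex j) c 0 l
      = ∑ i : Fin (j : ℕ), ((i : ℕ) + 1) * c i := by
  rw [sum_apply_extend_zero (topIndex_injective j) c (fun l n => (N - (l : ℕ)) * n)
    fun _ => mul_zero _]
  refine sum_congr rfl fun i _ => ?_
  rw [val_topIndex, Nat.sub_sub_self (by omega)]

lemma weightedSum_single_add (b : Fin N → ℕ) :
    ∑ l : Fin N, (N - (l : ℕ)) * (Pi.single j 1 + b : Fin N → ℕ) l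
      = (N - j) + ∑ l : Fin N, (N - (l : ℕ)) * b l := by
  simp [mul_add, sum_add_distrib, Pi.single_apply]

end TopIndex

section Lowering

variable {N k : ℕ} {j : Fin N} {a : Fin N → ℕ}

lemma single_add_lower (haj : a j ≠ 0) :
    Pi.single j 1 + (a - Pi.single j 1) = a := by
  funext l
  by_cases hl : l = j
  · subst hl
    simp only [Pi.add_apply, Pi.sub_apply, Pi.single_eq_same]
    omega
  · simp [hl]

lemma weightedSum_lower (ha : a ∈ vDIndex N k) (haj : a j ≠ 0) :
    ∑ l : Fin N, (N - (l : ℕ)) * (a - Pi.single j 1 : Fin N → ℕ) l + k = j := by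
  have hw := (mem_vDIndex.1 ha).2
  rw [← single_add_lower haj, weightedSum_single_add] at hw
  have := j.isLt
  omega

lemma lower_eq_zero_of_notMem_range (ha : a ∈ vDIndex N k) (haj : a j ≠ 0) {l : Fin N}
    (hl : l ∉ Set.range (topIndex j)) : (a - Pi.single j 1 : Fin N → ℕ) l = 0 := by
  rw [mem_range_topIndex] at hl
  have hw := weightedSum_lower ha haj
  have hle : (N - (l : ℕ)) * (a - Pi.single j 1 : Fin N → ℕ) l
      ≤ ∑ l : Fin N, (N - (l : ℕ)) * (a - Pi.single j 1 : Fin N → ℕ) l :=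
    single_le_sum (f := fun l : Fin N => (N - (l : ℕ)) * (a - Pi.single j 1 : Fin N → ℕ) l)
      (fun _ _ => Nat.zero_le _) (mem_univ l)
  by_contra h
  have := Nat.le_mul_of_pos_right (N - (l : ℕ)) (Nat.pos_of_ne_zero h)
  omega

end Lowering

lemma vDDeriv_ptD {N : ℕ} (j : Fin N) (hj : (j : ℕ) ≠ 0) (k : ℕ) (t0 sbar : ℝ) (s : ℕ → ℝ) :
    vDDeriv N k j (ptD N t0 sbar s) = stableVDDeriv j k s := by
  have hr := topIndex_injective j
  symm
  refine sum_nbij' (fun c => Pi.single j 1 + extend (topIndex j) c 0)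
    (fun a => (a - Pi.single j 1) ∘ topIndex j) ?_ ?_ ?_ ?_ ?_
  · intro c hc
    rw [mem_stableIndex] at hc
    refine mem_filter.2 ⟨mem_vDIndex.2 ⟨fun l hl => ?_, ?_⟩, by simp⟩
    · have hlj : l ≠ j := fun h => hj (h ▸ hl)
      have hlr : l ∉ Set.range (topIndex j) := by
        rw [mem_range_topIndex]
        omega
      simp [hlj, extend_apply' _ _ _ hlr]
    · rw [weightedSum_single_add, weightedSum_extend_topIndex]
      have := j.isLt
      omega
  · intro a ha
    obtain ⟨ha, haj⟩ := mem_filter.1 ha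
    rw [mem_stableIndex, ← weightedSum_extend_topIndex,
      extend_comp_eq_self hr fun l => lower_eq_zero_of_notMem_range ha haj]
    exact weightedSum_lower ha haj
  · intro c _
    simp only [add_tsub_cancel_left, extend_comp hr]
  · intro a ha
    obtain ⟨ha, haj⟩ := mem_filter.1 ha
    simp only [extend_comp_eq_self hr fun l => lower_eq_zero_of_notMem_range ha haj,
      single_add_lower haj]
  · intro c _
    simp only [add_tsub_cancel_left, Pi.add_apply]
    rw [sum_add_distrib, sum_apply_extend_zero hr c (fun _ n => n) fun _ => rfl,
      prod_apply_extend_zero hr c (fun l n => dpow (ptD N t0 sbar s l) n) fun _ => dpow_zero _]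
    simp [ptD_topIndex, add_comm]

noncomputable def stablePdFD (α : ℕ) (t0 : ℝ) (s : ℕ → ℝ) : ℝ :=
  ∑ k ∈ Icc 1 α, stableVDDeriv α k s * t0 ^ (2 * k - 1) / (2 ^ (k - 1) * (2 * (k : ℝ) - 1))

lemma pd_FD_ptD {N : ℕ} (j : Fin N) (hj : (j : ℕ) ≠ 0) (t0 sbar : ℝ) (s : ℕ → ℝ) :
    pd j (FD N) (ptD N t0 sbar s) = stablePdFD j t0 s := by
  have hpt0 : ptD N t0 sbar s 0 = t0 := if_pos rfl
  simp only [pd_FD N j hj, hpt0, vDDeriv_ptD j hj]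
  refine (sum_subset (Icc_subset_Icc_right (Nat.le_sub_one_of_lt j.isLt)) fun k hkN hkj => ?_).symm
  have hjk : (j : ℕ) < k := by
    rw [mem_Icc] at hkN hkj
    omega
  rw [stableVDDeriv, stableIndex_eq_empty hjk, sum_empty, zero_mul, zero_div]

theorem openD_stabilization_general (N M : ℕ) (hNM : N < M)
    (α : ℕ) (hα1 : 1 ≤ α) (hα2 : α < N)
    (t0 sbar : ℝ) (s : ℕ → ℝ) :
    pd α (FD N) (ptD N t0 sbar s) = pd α (FD M) (ptD M t0 sbar s) :=
  (pd_FD_ptD ⟨α, hα2⟩ (Nat.one_le_iff_ne_zero.1 hα1) t0 sbar s).trans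
    (pd_FD_ptD ⟨α, hα2.trans hNM⟩ (Nat.one_le_iff_ne_zero.1 hα1) t0 sbar s).symm

/-- stabilization of the open D-type potential. For `4 ≤ N < M` and
`1 ≤ α < N`, `∂F^o_{D_N}/∂t_α` under `t_{N-β} = s_β`, `t_N = s₋₁` equals
`∂F^o_{D_M}/∂t_α` under `t_{M-β} = s_β`, `t_M = s₋₁`, for all values of
`s₋₁, s_1, s_2, …` and `t_0 ≠ 0`. -/
theorem openD_stabilization (N M : ℕ) (hN : 4 ≤ N) (hNM : N < M)
    (α : ℕ) (hα1 : 1 ≤ α) (hα2 : α < N)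
    (t0 sbar : ℝ) (ht0 : t0 ≠ 0) (s : ℕ → ℝ) :
    pd α (FD N) (ptD N t0 sbar s) = pd α (FD M) (ptD M t0 sbar s) :=
  openD_stabilization_general N M hNM α hα1 hα2 t0 sbar s
end

section
/- Given a solution (F^c, F^o) of the open WDVV equations with flat metric η and unit ∂/∂t_1 (so that ∂_1∂_0 F^o = 1 and ∂_1∂_α F^o = 0 for α ≥ 1), the product on the (N+1)-dimensional space spanned by ∂/∂t_0, ..., ∂/∂t_N defined by ∂_α ∘ ∂_β = Σ_{γ,δ=1}^N (∂^3 F^c/∂t_α∂t_β∂t_γ) η^{γδ} ∂_δ + (∂^2 F^o/∂t_α∂t_β) ∂_0 for 0 ≤ α,β ≤ N (with third derivatives of F^c involving t_0 set to zero since F^c does not depend on t_0) is commutative and associative. -/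
/-! The product is bilinear with structure constants `T a b d`: the `∂_0`-coordinate is
`∂_a∂_bF^o`, the others are `∑ c a b μ η^{μ d}`. Commutativity is the symmetry of `T` in `a, b`;
given it, associativity amounts to `∑_e T p q e T e r d` being symmetric in `p, r`. For `d ≠ 0`
the `e = 0` term vanishes because `F^c` does not depend on `t_0`, and the identity is the closed
WDVV equation contracted with `η`; for `d = 0` it is exactly the open WDVV equation. -/

open Finset

section StructureConstants

variable {ι R : Type*} [CommSemiring R] (s : Finset ι) (T : ι → ι → ι → R)

def structProd (x y : ι → R) (d : ι) : R :=
  ∑ a ∈ s, ∑ b ∈ s, x a * y b * T a b d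

theorem structProd_comm (hT : ∀ a b d, T a b d = T b a d) (x y : ι → R) :
    structProd s T x y = structProd s T y x := by
  funext d
  rw [structProd, sum_comm]
  exact sum_congr rfl fun b _ => sum_congr rfl fun a _ => by rw [hT]; ring

theorem structProd_structProd_left (x y z : ι → R) (d : ι) :
    structProd s T (structProd s T x y) z d
      = ∑ p ∈ s, ∑ q ∈ s, ∑ r ∈ s, x p * y q * z r * ∑ e ∈ s, T p q e * T e r d := by
  simp only [structProd, sum_mul, mul_sum]
  calc _ = ∑ e ∈ s, ∑ p ∈ s, ∑ q ∈ s, ∑ r ∈ s, x p * y q * z r * (T p q e * T e r d) :=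
        sum_congr rfl fun e _ => sum_comm.trans <| sum_congr rfl fun p _ =>
          sum_comm.trans <| sum_congr rfl fun q _ => sum_congr rfl fun r _ => by ring
    _ = _ := sum_comm.trans <| sum_congr rfl fun p _ =>
          sum_comm.trans <| sum_congr rfl fun q _ => sum_comm

theorem structProd_structProd_right (x y z : ι → R) (d : ι) :
    structProd s T x (structProd s T y z) d
      = ∑ p ∈ s, ∑ q ∈ s, ∑ r ∈ s, x p * y q * z r * ∑ e ∈ s, T q r e * T p e d := by
  simp only [structProd, sum_mul, mul_sum]
  exact sum_congr rfl fun p _ => sum_comm.trans <| sum_congr rfl fun q _ =>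
    sum_comm.trans <| sum_congr rfl fun r _ => sum_congr rfl fun e _ => by ring

theorem structProd_assoc
    (hT : ∀ p ∈ s, ∀ q ∈ s, ∀ r ∈ s, ∀ d,
      ∑ e ∈ s, T p q e * T e r d = ∑ e ∈ s, T q r e * T p e d)
    (x y z : ι → R) :
    structProd s T (structProd s T x y) z = structProd s T x (structProd s T y z) := by
  funext d
  rw [structProd_structProd_left, structProd_structProd_right]
  exact sum_congr rfl fun p hp => sum_congr rfl fun q hq => sum_congr rfl fun r hr => by
    rw [hT p hp q hq r hr]

/-- For a commutative product, associativity `(pq)r = p(qr)` is equivalent to `(pq)r = (rq)p`,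
which is the shape in which the WDVV equations are written. -/
theorem structProd_assoc_of_comm (hcomm : ∀ a b d, T a b d = T b a d)
    (hswap : ∀ p ∈ s, ∀ q ∈ s, ∀ r ∈ s, ∀ d,
      ∑ e ∈ s, T p q e * T e r d = ∑ e ∈ s, T r q e * T e p d)
    (x y z : ι → R) :
    structProd s T (structProd s T x y) z = structProd s T x (structProd s T y z) := by
  refine structProd_assoc s T (fun p hp q hq r hr d => ?_) x y z
  rw [hswap p hp q hq r hr d]
  exact sum_congr rfl fun e _ => by rw [hcomm r q, hcomm e p]

end StructureConstants

theorem sum_range_succ_eq_add_sum_Icc {M : Type*} [AddCommMonoid M] (N : ℕ) (f : ℕ → M) :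
    ∑ e ∈ range (N + 1), f e = f 0 + ∑ e ∈ Icc 1 N, f e := by
  rw [range_eq_Ico, sum_eq_sum_Ico_succ_bot N.succ_pos]
  rfl

section OpenWDVV

variable {N : ℕ} {c : ℕ → ℕ → ℕ → ℝ} {o η : ℕ → ℕ → ℝ}

/-- The structure constants `T a b d` of `∂_a ∘ ∂_b`. -/
noncomputable def openWDVVConst (N : ℕ) (c : ℕ → ℕ → ℕ → ℝ) (o η : ℕ → ℕ → ℝ) (a b d : ℕ) :
    ℝ :=
  if d = 0 then o a b else ∑ μ ∈ Icc 1 N, c a b μ * η μ d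

@[simp]
theorem openWDVVConst_zero (a b : ℕ) : openWDVVConst N c o η a b 0 = o a b := if_pos rfl

theorem openWDVVConst_of_ne_zero {d : ℕ} (hd : d ≠ 0) (a b : ℕ) :
    openWDVVConst N c o η a b d = ∑ μ ∈ Icc 1 N, c a b μ * η μ d := if_neg hd

theorem openWDVVConst_of_mem_Icc {d : ℕ} (hd : d ∈ Icc 1 N) (a b : ℕ) :
    openWDVVConst N c o η a b d = ∑ μ ∈ Icc 1 N, c a b μ * η μ d :=
  openWDVVConst_of_ne_zero (by grind) a b

theorem openWDVVConst_comm (hc : ∀ a b g, c a b g = c b a g) (ho : ∀ a b, o a b = o b a)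
    (a b d : ℕ) : openWDVVConst N c o η a b d = openWDVVConst N c o η b a d := by
  unfold openWDVVConst
  split_ifs
  · exact ho a b
  · exact sum_congr rfl fun μ _ => by rw [hc]

theorem sum_openWDVVConst_mul_zero (p q r : ℕ) :
    ∑ e ∈ range (N + 1), openWDVVConst N c o η p q e * openWDVVConst N c o η e r 0
      = (∑ μ ∈ Icc 1 N, ∑ ν ∈ Icc 1 N, c p q μ * η μ ν * o ν r) + o p q * o 0 r := by
  rw [sum_range_succ_eq_add_sum_Icc, add_comm, sum_comm]
  simp only [openWDVVConst_zero, ← sum_mul]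
  congr 1
  exact sum_congr rfl fun ν hν => by rw [openWDVVConst_of_mem_Icc hν]

theorem sum_openWDVVConst_mul_of_ne_zero (hc0 : ∀ b g, c 0 b g = 0) {d : ℕ} (hd : d ≠ 0)
    (p q r : ℕ) :
    ∑ e ∈ range (N + 1), openWDVVConst N c o η p q e * openWDVVConst N c o η e r d
      = ∑ ν ∈ Icc 1 N, (∑ μ ∈ Icc 1 N, ∑ e ∈ Icc 1 N, c p q μ * η μ e * c e r ν) * η ν d := by
  have hT0 : openWDVVConst N c o η 0 r d = 0 := by simp [openWDVVConst_of_ne_zero hd, hc0]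
  rw [sum_range_succ_eq_add_sum_Icc, hT0, mul_zero, zero_add]
  calc _ = ∑ e ∈ Icc 1 N, ∑ μ ∈ Icc 1 N, ∑ ν ∈ Icc 1 N,
          c p q μ * η μ e * (c e r ν * η ν d) :=
        sum_congr rfl fun e he => by
          rw [openWDVVConst_of_mem_Icc he, openWDVVConst_of_ne_zero hd, sum_mul_sum]
    _ = _ := by
      simp only [sum_mul]
      exact sum_comm.trans <| (sum_congr rfl fun μ _ => sum_comm).trans <| sum_comm.trans <|
        sum_congr rfl fun ν _ => sum_congr rfl fun μ _ => sum_congr rfl fun e _ => by ring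

theorem sum_openWDVVConst_mul_swap (hc0 : ∀ b g, c 0 b g = 0)
    (hWDVV : ∀ a b g e, a ≤ N → b ≤ N → g ≤ N → e ≤ N →
      ∑ μ ∈ Icc 1 N, ∑ ν ∈ Icc 1 N, c a b μ * η μ ν * c ν g e
        = ∑ μ ∈ Icc 1 N, ∑ ν ∈ Icc 1 N, c g b μ * η μ ν * c ν a e)
    (hopenWDVV : ∀ a b g, a ≤ N → b ≤ N → g ≤ N →
      (∑ μ ∈ Icc 1 N, ∑ ν ∈ Icc 1 N, c a b μ * η μ ν * o ν g) + o a b * o 0 g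
        = (∑ μ ∈ Icc 1 N, ∑ ν ∈ Icc 1 N, c g b μ * η μ ν * o ν a) + o g b * o 0 a)
    {p q r : ℕ} (hp : p ≤ N) (hq : q ≤ N) (hr : r ≤ N) (d : ℕ) :
    ∑ e ∈ range (N + 1), openWDVVConst N c o η p q e * openWDVVConst N c o η e r d
      = ∑ e ∈ range (N + 1), openWDVVConst N c o η r q e * openWDVVConst N c o η e p d := by
  rcases eq_or_ne d 0 with rfl | hd
  · rw [sum_openWDVVConst_mul_zero, sum_openWDVVConst_mul_zero]
    exact hopenWDVV p q r hp hq hr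
  · rw [sum_openWDVVConst_mul_of_ne_zero hc0 hd, sum_openWDVVConst_mul_of_ne_zero hc0 hd]
    exact sum_congr rfl fun ν hν => by rw [hWDVV p q r ν hp hq hr (mem_Icc.1 hν).2]

end OpenWDVV

theorem open_WDVV_product_comm_assoc_general (N : ℕ)
    (c : ℕ → ℕ → ℕ → ℝ) (o : ℕ → ℕ → ℝ) (η : ℕ → ℕ → ℝ)
    (hcsymm : ∀ a b g, c a b g = c b a g ∧ c a b g = c a g b)
    (hosymm : ∀ a b, o a b = o b a)
    (hc0 : ∀ b g, c 0 b g = 0)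
    (hWDVV : ∀ a b g e, a ≤ N → b ≤ N → g ≤ N → e ≤ N →
      ∑ μ ∈ Finset.Icc 1 N, ∑ ν ∈ Finset.Icc 1 N, c a b μ * η μ ν * c ν g e
        = ∑ μ ∈ Finset.Icc 1 N, ∑ ν ∈ Finset.Icc 1 N, c g b μ * η μ ν * c ν a e)
    (hopenWDVV : ∀ a b g, a ≤ N → b ≤ N → g ≤ N →
      (∑ μ ∈ Finset.Icc 1 N, ∑ ν ∈ Finset.Icc 1 N, c a b μ * η μ ν * o ν g)
          + o a b * o 0 g
        = (∑ μ ∈ Finset.Icc 1 N, ∑ ν ∈ Finset.Icc 1 N, c g b μ * η μ ν * o ν a)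
          + o g b * o 0 a)
    (mul : (ℕ → ℝ) → (ℕ → ℝ) → (ℕ → ℝ))
    (hmul : ∀ x y dd, mul x y dd
      = ∑ a ∈ Finset.range (N + 1), ∑ b ∈ Finset.range (N + 1),
          x a * y b * (if dd = 0 then o a b else ∑ μ ∈ Finset.Icc 1 N, c a b μ * η μ dd)) :
    (∀ x y dd, dd ≤ N → mul x y dd = mul y x dd) ∧
    (∀ x y z dd, dd ≤ N → mul (mul x y) z dd = mul x (mul y z) dd) := by
  have hmul' : mul = structProd (range (N + 1)) (openWDVVConst N c o η) :=
    funext fun x => funext fun y => funext fun d => hmul x y d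
  subst hmul'
  have hcomm := openWDVVConst_comm (η := η) (N := N) (fun a b g => (hcsymm a b g).1) hosymm
  refine ⟨fun x y d _ => by rw [structProd_comm _ _ hcomm], fun x y z d _ => ?_⟩
  refine congrFun (structProd_assoc_of_comm _ _ hcomm (fun p hp q hq r hr => ?_) x y z) d
  exact sum_openWDVVConst_mul_swap hc0 hWDVV hopenWDVV (by grind) (by grind) (by grind)

/-- given a solution `(F^c, F^o)` of the open WDVV equations, encoded
pointwise by its derivative tensors — `c a b g = ∂³F^c/∂t_a∂t_b∂t_g` (vanishing when
any index is `0`, since `F^c` does not depend on `t_0`), `o a b = ∂²F^o/∂t_a∂t_b`,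
and the inverse metric `η` (supported on indices `1,…,N`, inverse to
`η_{ab} = ∂_1∂_a∂_b F^c`) — with flat unit `∂/∂t_1` (so `∂_1∂_0F^o = 1`,
`∂_1∂_aF^o = 0` for `a ≥ 1`), the product
`∂_a ∘ ∂_b = ∑_{g,dd=1}^N c a b g η^{g,dd} ∂_dd + o a b ∂_0` on the span of
`∂_0,…,∂_N` is commutative and associative. -/
theorem open_WDVV_product_comm_assoc (N : ℕ) (hN : 1 ≤ N)
    (c : ℕ → ℕ → ℕ → ℝ) (o : ℕ → ℕ → ℝ) (η : ℕ → ℕ → ℝ)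
    (hcsymm : ∀ a b g, c a b g = c b a g ∧ c a b g = c a g b)
    (hosymm : ∀ a b, o a b = o b a)
    (hηsymm : ∀ a b, η a b = η b a)
    (hc0 : ∀ b g, c 0 b g = 0)
    (hη0 : ∀ b, η 0 b = 0)
    (hounit0 : o 1 0 = 1)
    (hounit : ∀ a, 1 ≤ a → o 1 a = 0)
    (hcunit : ∀ a b, 1 ≤ a → a ≤ N → 1 ≤ b → b ≤ N →
      ∑ μ ∈ Finset.Icc 1 N, c 1 a μ * η μ b = if a = b then 1 else 0)
    (hWDVV : ∀ a b g e, a ≤ N → b ≤ N → g ≤ N → e ≤ N →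
      ∑ μ ∈ Finset.Icc 1 N, ∑ ν ∈ Finset.Icc 1 N, c a b μ * η μ ν * c ν g e
        = ∑ μ ∈ Finset.Icc 1 N, ∑ ν ∈ Finset.Icc 1 N, c g b μ * η μ ν * c ν a e)
    (hopenWDVV : ∀ a b g, a ≤ N → b ≤ N → g ≤ N →
      (∑ μ ∈ Finset.Icc 1 N, ∑ ν ∈ Finset.Icc 1 N, c a b μ * η μ ν * o ν g)
          + o a b * o 0 g
        = (∑ μ ∈ Finset.Icc 1 N, ∑ ν ∈ Finset.Icc 1 N, c g b μ * η μ ν * o ν a)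
          + o g b * o 0 a)
    (mul : (ℕ → ℝ) → (ℕ → ℝ) → (ℕ → ℝ))
    (hmul : ∀ x y dd, mul x y dd
      = ∑ a ∈ Finset.range (N + 1), ∑ b ∈ Finset.range (N + 1),
          x a * y b * (if dd = 0 then o a b else ∑ μ ∈ Finset.Icc 1 N, c a b μ * η μ dd)) :
    (∀ x y dd, dd ≤ N → mul x y dd = mul y x dd) ∧
    (∀ x y z dd, dd ≤ N → mul (mul x y) z dd = mul x (mul y z) dd) :=
  open_WDVV_product_comm_assoc_general N c o η hcsymm hosymm hc0 hWDVV hopenWDVV mul hmul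
end

section
/- If (F^c, F^o) is a solution of the open WDVV equations with metric η and F^o additionally satisfies the quasihomogeneity condition guaranteeing ∂_α∂_β F^o = 0 for the relevant index range, then for the D-type system the compatibility identity Σ_{δ=1}^κ (∂^2 F^o/∂t_0∂t_{κ-δ})(∂^3 F^c/∂t_δ∂t_α∂t_β) = (∂^2 F^o/∂t_β∂t_0)(∂^2 F^o/∂t_0∂t_α) holds for all 2 ≤ α, β with α + β ≤ κ and α, β ≠ κ, where η^{αβ} = δ^{α+β,κ} for α,β < κ and η^{κκ} = 1. -/
/-- The index pairing of the type `D_κ` metric `η^{ab} = δ^{a+b,κ}` (for `a,b < κ`),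
`η^{κκ} = 1`: the index dual to `δ` is `κ - δ` for `δ < κ` and `κ` itself for `δ = κ`. -/
def dbar (κ δ : ℕ) : ℕ := if δ = κ then κ else κ - δ

/-- Open WDVV for indices `0, a, b, g`, with `c` and `o` the third derivatives of `F^c` and the
second derivatives of `F^o`. -/
def OpenWDVV (κ : ℕ) (c : ℕ → ℕ → ℕ → ℝ) (o : ℕ → ℕ → ℝ) : Prop :=
  ∀ a b g, a ≤ κ → b ≤ κ → g ≤ κ →
    (∑ μ ∈ Finset.Icc 1 κ, c a b μ * o (dbar κ μ) g) + o a b * o 0 g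
      = (∑ μ ∈ Finset.Icc 1 κ, c g b μ * o (dbar κ μ) a) + o g b * o 0 a

theorem OpenWDVV.sum_add_mul_eq_of_third_index_zero {κ : ℕ} {c : ℕ → ℕ → ℕ → ℝ}
    {o : ℕ → ℕ → ℝ} (h : OpenWDVV κ c o) (hc0 : ∀ b g, c 0 b g = 0) {a b : ℕ}
    (ha : a ≤ κ) (hb : b ≤ κ) :
    (∑ μ ∈ Finset.Icc 1 κ, c a b μ * o (dbar κ μ) 0) + o a b * o 0 0 = o 0 b * o 0 a := by
  simpa only [hc0, zero_mul, Finset.sum_const_zero, zero_add] using h a b 0 ha hb κ.zero_le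

theorem D_type_compatibility_general (κ : ℕ)
    (c : ℕ → ℕ → ℕ → ℝ) (o : ℕ → ℕ → ℝ)
    (hcsymm : ∀ a b g, c a b g = c b a g ∧ c a b g = c a g b)
    (hosymm : ∀ a b, o a b = o b a)
    (hc0 : ∀ b g, c 0 b g = 0)
    (hopenWDVV : ∀ a b g, a ≤ κ → b ≤ κ → g ≤ κ →
      (∑ μ ∈ Finset.Icc 1 κ, c a b μ * o (dbar κ μ) g) + o a b * o 0 g
        = (∑ μ ∈ Finset.Icc 1 κ, c g b μ * o (dbar κ μ) a) + o g b * o 0 a)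
    (hvanish : ∀ a b, 2 ≤ a → 2 ≤ b → a + b ≤ κ → a ≠ κ → b ≠ κ → o a b = 0) :
    ∀ α β, 2 ≤ α → 2 ≤ β → α + β ≤ κ → α ≠ κ → β ≠ κ →
      ∑ δ ∈ Finset.Icc 1 κ, o 0 (dbar κ δ) * c δ α β = o β 0 * o 0 α := by
  intro α β hα hβ hαβ hακ hβκ
  have hWDVV := OpenWDVV.sum_add_mul_eq_of_third_index_zero hopenWDVV hc0
    (a := α) (b := β) (by omega) (by omega)
  rw [hvanish α β hα hβ hαβ hακ hβκ, zero_mul, add_zero] at hWDVV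
  calc ∑ δ ∈ Finset.Icc 1 κ, o 0 (dbar κ δ) * c δ α β
      = ∑ δ ∈ Finset.Icc 1 κ, c α β δ * o (dbar κ δ) 0 := by
        refine Finset.sum_congr rfl fun δ _ => ?_
        rw [hosymm, (hcsymm δ α β).1, (hcsymm α δ β).2, mul_comm]
    _ = o 0 β * o 0 α := hWDVV
    _ = o β 0 * o 0 α := by rw [hosymm]

/-- D-type compatibility identity.  Encode the derivative tensors of
the `D_κ` pair `(F^c, F^o)` pointwise: `c a b g = ∂³F^c/∂t_a∂t_b∂t_g` (zero if any
index is `0`), `o a b = ∂²F^o/∂t_a∂t_b`.  Assume the open WDVV equation (with third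
index `0`) for the metric `η^{ab} = δ^{a+b,κ}` (`a,b < κ`), `η^{κκ} = 1`, and the
vanishing `∂_a∂_b F^o = 0` for `2 ≤ a,b`, `a+b ≤ κ`, `a,b ≠ κ` guaranteed by
quasihomogeneity.  Then for all `2 ≤ α,β` with `α+β ≤ κ` and `α,β ≠ κ`:
`∑_{δ=1}^κ (∂²F^o/∂t_0∂t_{δ̄})(∂³F^c/∂t_δ∂t_α∂t_β) = (∂²F^o/∂t_β∂t_0)(∂²F^o/∂t_0∂t_α)`. -/
theorem D_type_compatibility (κ : ℕ) (hκ : 4 ≤ κ)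
    (c : ℕ → ℕ → ℕ → ℝ) (o : ℕ → ℕ → ℝ)
    (hcsymm : ∀ a b g, c a b g = c b a g ∧ c a b g = c a g b)
    (hosymm : ∀ a b, o a b = o b a)
    (hc0 : ∀ b g, c 0 b g = 0)
    (hopenWDVV : ∀ a b g, a ≤ κ → b ≤ κ → g ≤ κ →
      (∑ μ ∈ Finset.Icc 1 κ, c a b μ * o (dbar κ μ) g) + o a b * o 0 g
        = (∑ μ ∈ Finset.Icc 1 κ, c g b μ * o (dbar κ μ) a) + o g b * o 0 a)
    (hvanish : ∀ a b, 2 ≤ a → 2 ≤ b → a + b ≤ κ → a ≠ κ → b ≠ κ → o a b = 0) :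
    ∀ α β, 2 ≤ α → 2 ≤ β → α + β ≤ κ → α ≠ κ → β ≠ κ →
      ∑ δ ∈ Finset.Icc 1 κ, o 0 (dbar κ δ) * c δ α β = o β 0 * o 0 α :=
  D_type_compatibility_general κ c o hcsymm hosymm hc0 hopenWDVV hvanish
end
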